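/- arXiv:math/0410029 — 7 statements merged into one kernel-verified Lean document; each statement's English description precedes it below -/
import Mathlib

section
/- Let n ≥ 1 and λ ∈ ℝ. The linear map δ₁ : h → h ⊗ h defined by δ₁(x,y,z) = λ·((x,−y,0) ⊗ e_z − e_z ⊗ (x,−y,0)), where e_z = (0,0,1), is a Lie-algebra 1-cocycle with respect to the adjoint action: for all u, v ∈ h one has δ₁([u,v]) = ad_u(δ₁(v)) − ad_v(δ₁(u)). -/
open scoped TensorProduct BigOperators

noncomputable section

/-- The underlying space of the `(2n+1)`-dimensional Heisenberg Lie algebra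
`h = ℝⁿ × ℝⁿ × ℝ`. -/
abbrev Heis (n : ℕ) : Type := (Fin n → ℝ) × (Fin n → ℝ) × ℝ

/-- The Heisenberg Lie bracket `[(x,y,z),(x',y',z')] = (0,0,⟨x,y'⟩ − ⟨x',y⟩)`,
as a linear map in the second variable. -/
def heisBr {n : ℕ} (u : Heis n) : Heis n →ₗ[ℝ] Heis n where
  toFun v := (0, 0, (∑ i, u.1 i * v.2.1 i) - ∑ i, v.1 i * u.2.1 i)
  map_add' v w := by
    ext
    · simp
    · simp
    · simp only [Prod.fst_add, Prod.snd_add, Pi.add_apply]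
      simp [mul_add, add_mul, Finset.sum_add_distrib]
      ring
  map_smul' c v := by
    ext
    · simp
    · simp
    · simp only [Prod.smul_fst, Prod.smul_snd, Pi.smul_apply, smul_eq_mul, RingHom.id_apply]
      simp [Finset.mul_sum, mul_sub]
      ring_nf
      rw [sub_eq_neg_add]
      congr 1
      exact Finset.sum_congr rfl fun i _ => by ring

/-- The adjoint action of `u` on the tensor square `h ⊗ h`, determined by
`ad_u (a ⊗ b) = [u,a] ⊗ b + a ⊗ [u,b]`. -/
def adT {n : ℕ} (u : Heis n) :
    (Heis n ⊗[ℝ] Heis n) →ₗ[ℝ] (Heis n ⊗[ℝ] Heis n) :=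
  TensorProduct.map (heisBr u) LinearMap.id + TensorProduct.map LinearMap.id (heisBr u)

/-- The central basis vector `e_z = (0,0,1)`. -/
def ez (n : ℕ) : Heis n := (0, 0, 1)

/-- The cobracket `δ₁(x,y,z) = λ·((x,−y,0) ⊗ e_z − e_z ⊗ (x,−y,0))`. -/
def delta1 {n : ℕ} (lam : ℝ) (v : Heis n) : Heis n ⊗[ℝ] Heis n :=
  lam • (((v.1, -v.2.1, (0:ℝ)) : Heis n) ⊗ₜ[ℝ] ez n
          - ez n ⊗ₜ[ℝ] ((v.1, -v.2.1, (0:ℝ)) : Heis n))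

/-- `δ₁` is a Lie-algebra 1-cocycle with respect to the adjoint action:
`δ₁([u,v]) = ad_u(δ₁(v)) − ad_v(δ₁(u))` for all `u, v` in the Heisenberg Lie algebra. -/
theorem delta1_is_one_cocycle (n : ℕ) (hn : 1 ≤ n) (lam : ℝ) :
    ∀ u v : Heis n,
      delta1 lam (heisBr u v) = adT u (delta1 lam v) - adT v (delta1 lam u) := by
  intro u v
  have hez : ∀ w : Heis n, heisBr w (ez n) = 0 := by
    intro w; simp [heisBr, ez, Prod.ext_iff]
  have hbr : ∀ (w a : Heis n), heisBr w a
      = ((∑ i, w.1 i * a.2.1 i) - ∑ i, a.1 i * w.2.1 i) • ez n := by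
    intro w a
    simp [heisBr, ez, Prod.ext_iff]
  have hadT : ∀ (w : Heis n) (a b : Heis n),
      adT w (a ⊗ₜ[ℝ] b) = heisBr w a ⊗ₜ[ℝ] b + a ⊗ₜ[ℝ] heisBr w b := by
    intro w a b; simp [adT]
  have hL : delta1 lam (heisBr u v) = 0 := by
    have : ((heisBr u v).1, -(heisBr u v).2.1, (0:ℝ)) = (0 : Heis n) := by
      simp [heisBr, Prod.ext_iff]
    simp [delta1, this]
  rw [hL]
  have hterm : ∀ (w x : Heis n), adT w (delta1 lam x) = 0 := by
    intro w x
    have h1 : adT w (delta1 lam x)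
        = lam • (adT w (((x.1, -x.2.1, (0:ℝ)) : Heis n) ⊗ₜ[ℝ] ez n)
            - adT w (ez n ⊗ₜ[ℝ] ((x.1, -x.2.1, (0:ℝ)) : Heis n))) := by
      simp [delta1, map_sub]
    rw [h1, hadT, hadT, hez, hbr w ((x.1, -x.2.1, (0:ℝ)) : Heis n)]
    simp only [TensorProduct.tmul_zero, TensorProduct.zero_tmul, add_zero, zero_add,
      TensorProduct.smul_tmul, sub_self, smul_zero]
  rw [hterm, hterm, sub_zero]

end
end

section
/- Let n ≥ 1 and λ ∈ ℝ. The linear map δ₂ : h → h ⊗ h defined by δ₂(x,y,z) = λ·((x,y,0) ⊗ e_z − e_z ⊗ (x,y,0)), where e_z = (0,0,1), is a Lie-algebra 1-cocycle with respect to the adjoint action: for all u, v ∈ h one has δ₂([u,v]) = ad_u(δ₂(v)) − ad_v(δ₂(u)). -/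
open scoped TensorProduct BigOperators

noncomputable section

/-- The cobracket `δ₂(x,y,z) = λ·((x,y,0) ⊗ e_z − e_z ⊗ (x,y,0))`. -/
def delta2 {n : ℕ} (lam : ℝ) (v : Heis n) : Heis n ⊗[ℝ] Heis n :=
  lam • (((v.1, v.2.1, (0:ℝ)) : Heis n) ⊗ₜ[ℝ] ez n
          - ez n ⊗ₜ[ℝ] ((v.1, v.2.1, (0:ℝ)) : Heis n))

/-!
Both sides of the cocycle identity vanish. The bracket takes values in the centre `ℝ e_z`, on
which `δ₂` is zero. On the right, `e_z` is central, so
`ad_u (a ⊗ e_z − e_z ⊗ a) = [u,a] ⊗ e_z − e_z ⊗ [u,a]`, and since `[u,a] = c e_z` this is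
`c (e_z ⊗ e_z − e_z ⊗ e_z) = 0`.
-/

open TensorProduct

section Heisenberg

variable {n : ℕ}

theorem heisBr_ez (u : Heis n) : heisBr u (ez n) = 0 := by
  ext <;> simp [heisBr, ez]

theorem heisBr_eq_smul_ez (u a : Heis n) :
    heisBr u a = ((∑ i, u.1 i * a.2.1 i) - ∑ i, a.1 i * u.2.1 i) • ez n := by
  ext <;> simp [heisBr, ez]

theorem adT_tmul (u a b : Heis n) :
    adT u (a ⊗ₜ b) = heisBr u a ⊗ₜ b + a ⊗ₜ heisBr u b := by
  simp [adT]

theorem adT_tmul_ez_sub_ez_tmul (u a : Heis n) :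
    adT u (a ⊗ₜ ez n - ez n ⊗ₜ a) = 0 := by
  rw [map_sub, adT_tmul, adT_tmul, heisBr_ez, heisBr_eq_smul_ez u a, tmul_zero, zero_tmul,
    add_zero, zero_add, smul_tmul, sub_self]

theorem adT_delta2 (lam : ℝ) (u v : Heis n) : adT u (delta2 lam v) = 0 := by
  rw [delta2, map_smul, adT_tmul_ez_sub_ez_tmul, smul_zero]

theorem delta2_heisBr (lam : ℝ) (u v : Heis n) : delta2 lam (heisBr u v) = 0 := by
  simp [delta2, heisBr, Prod.mk_zero_zero]

end Heisenberg

theorem delta2_is_one_cocycle_general (n : ℕ) (lam : ℝ) :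
    ∀ u v : Heis n,
      delta2 lam (heisBr u v) = adT u (delta2 lam v) - adT v (delta2 lam u) := by
  intro u v
  rw [delta2_heisBr, adT_delta2, adT_delta2, sub_zero]

/-- `δ₂` is a Lie-algebra 1-cocycle with respect to the adjoint action:
`δ₂([u,v]) = ad_u(δ₂(v)) − ad_v(δ₂(u))` for all `u, v` in the Heisenberg Lie algebra. -/
theorem delta2_is_one_cocycle (n : ℕ) (hn : 1 ≤ n) (lam : ℝ) :
    ∀ u v : Heis n,
      delta2 lam (heisBr u v) = adT u (delta2 lam v) - adT v (delta2 lam u) :=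
  delta2_is_one_cocycle_general n lam

end
end

section
/- Let n ≥ 2 and let J be a skew-symmetric real n × n matrix (J_{ij} = −J_{ji}). The linear map δ₃ : h → h ⊗ h defined by δ₃(x,y,z) = (Jy, 0, 0) ⊗ e_z − e_z ⊗ (Jy, 0, 0), where (Jy)_i = Σ_j J_{ij} y_j and e_z = (0,0,1), is a Lie-algebra 1-cocycle with respect to the adjoint action: for all u, v ∈ h one has δ₃([u,v]) = ad_u(δ₃(v)) − ad_v(δ₃(u)). -/
open scoped TensorProduct BigOperators

noncomputable section

/-- The cobracket `δ₃(x,y,z) = (Jy,0,0) ⊗ e_z − e_z ⊗ (Jy,0,0)`, where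
`(Jy)_i = Σ_j J_{ij} y_j`. -/
def delta3 {n : ℕ} (J : Matrix (Fin n) (Fin n) ℝ) (v : Heis n) :
    Heis n ⊗[ℝ] Heis n :=
  (((fun i => ∑ j, J i j * v.2.1 j, 0, (0:ℝ)) : Heis n) ⊗ₜ[ℝ] ez n)
    - (ez n ⊗ₜ[ℝ] (((fun i => ∑ j, J i j * v.2.1 j, 0, (0:ℝ)) : Heis n)))

lemma adT_delta3_eq_zero {n : ℕ} (J : Matrix (Fin n) (Fin n) ℝ) (u v : Heis n) :
    adT u (delta3 J v) = 0 := by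
  set a : Heis n := (fun i => ∑ j, J i j * v.2.1 j, 0, (0:ℝ)) with ha
  have h1 : heisBr u (ez n) = 0 := by
    simp [heisBr, ez, Prod.ext_iff]
  have h2 : heisBr u a = (-(∑ i, a.1 i * u.2.1 i)) • ez n := by
    simp [heisBr, ez, ha, Prod.ext_iff, Prod.smul_def]
  have : delta3 J v = a ⊗ₜ[ℝ] ez n - ez n ⊗ₜ[ℝ] a := rfl
  rw [this]
  simp only [adT, LinearMap.add_apply, map_sub, TensorProduct.map_tmul,
    LinearMap.id_coe, id_eq, h1, h2, TensorProduct.smul_tmul',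
    TensorProduct.tmul_smul, TensorProduct.zero_tmul, TensorProduct.tmul_zero]
  module

/-- For a skew-symmetric `n × n` matrix `J` (`n ≥ 2`), the map `δ₃` is a
Lie-algebra 1-cocycle with respect to the adjoint action:
`δ₃([u,v]) = ad_u(δ₃(v)) − ad_v(δ₃(u))` for all `u, v` in the Heisenberg Lie algebra. -/
theorem delta3_is_one_cocycle (n : ℕ) (hn : 2 ≤ n) (J : Matrix (Fin n) (Fin n) ℝ)
    (hJ : ∀ i j, J i j = - J j i) :
    ∀ u v : Heis n,
      delta3 J (heisBr u v) = adT u (delta3 J v) - adT v (delta3 J u) := by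
  intro u v
  rw [adT_delta3_eq_zero, adT_delta3_eq_zero, sub_zero]
  have hz : (heisBr u v).2.1 = 0 := rfl
  simp only [delta3, hz, Pi.zero_apply, mul_zero, Finset.sum_const_zero]
  have h0 : ((fun _ => (0:ℝ), ((0 : Fin n → ℝ), (0:ℝ))) : Heis n) = 0 := rfl
  rw [h0, TensorProduct.zero_tmul, TensorProduct.tmul_zero, sub_zero]

end
end

section
/- Let n ≥ 1 and λ ∈ ℝ. The bilinear bracket on g = ℝⁿ × ℝⁿ × ℝ defined by [(p,q,r),(p',q',r')] = (λ(r'p − r p'), −λ(r'q − r q'), 0) is antisymmetric and satisfies the Jacobi identity, so it makes g a Lie algebra; moreover it is dual to the cobracket δ₁ in the sense that for all μ, ν ∈ g and all X ∈ h, ⟨[μ,ν], X⟩ = ⟨μ ⊗ ν, δ₁(X)⟩, where δ₁(x,y,z) = λ·((x,−y,0) ⊗ e_z − e_z ⊗ (x,−y,0)) with e_z = (0,0,1). -/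
open scoped TensorProduct BigOperators

noncomputable section

/-- The dual pairing `⟨(p,q,r),(x,y,z)⟩ = ⟨p,x⟩ + ⟨q,y⟩ + rz`, as a linear map
in the second variable. -/
def pairL {n : ℕ} (μ : Heis n) : Heis n →ₗ[ℝ] ℝ where
  toFun X := (∑ i, μ.1 i * X.1 i) + (∑ i, μ.2.1 i * X.2.1 i) + μ.2.2 * X.2.2
  map_add' X Y := by
    simp only [Prod.fst_add, Prod.snd_add, Pi.add_apply]
    simp [mul_add, Finset.sum_add_distrib]
    ring
  map_smul' c X := by
    simp only [Prod.smul_fst, Prod.smul_snd, Pi.smul_apply, smul_eq_mul, RingHom.id_apply,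
      mul_add, Finset.mul_sum]
    congr 1
    · congr 1
      · exact Finset.sum_congr rfl fun i _ => by ring
      · exact Finset.sum_congr rfl fun i _ => by ring
    · ring

/-- The pairing extended to tensor squares: `⟨μ ⊗ ν, a ⊗ b⟩ = ⟨μ,a⟩⟨ν,b⟩`. -/
def pairT {n : ℕ} (μ ν : Heis n) : (Heis n ⊗[ℝ] Heis n) →ₗ[ℝ] ℝ :=
  TensorProduct.lift ((LinearMap.mul ℝ ℝ).compl₁₂ (pairL μ) (pairL ν))

/-- The bracket `[(p,q,r),(p',q',r')] = (λ(r'p − rp'), −λ(r'q − rq'), 0)` on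
`g = ℝⁿ × ℝⁿ × ℝ`. -/
def gBr1 {n : ℕ} (lam : ℝ) (μ ν : Heis n) : Heis n :=
  (lam • (ν.2.2 • μ.1 - μ.2.2 • ν.1), -(lam • (ν.2.2 • μ.2.1 - μ.2.2 • ν.2.1)), 0)

/-! With `r = centralCoord`, `r(p,q,r) = r`, and `J = heisFlip`, `J(p,q,r) = (p,-q,0)`, the
bracket is `[μ,ν] = r(ν) • λJμ - r(μ) • λJν`. Since `r ∘ J = 0`, every bracket lies in `ker r`,
so a double bracket `[μ,[ν,ρ]]` collapses to `-r(μ) • λJ[ν,ρ]` and the six terms of the Jacobi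
sum cancel in pairs. Duality with `δ₁` holds because the pairing is symmetric, `J` is
self-adjoint for it and `⟨μ, e_z⟩ = r(μ)`. -/

section SkewBracket

variable {R V : Type*} [CommRing R] [AddCommGroup V] [Module R V]

/-- When `f ∘ φ = 0` this is the semidirect product of the line spanned by any `e` with
`f e = 1`, acting by `-φ` on the abelian ideal `ker f`. -/
def skewBracket (f : V →ₗ[R] R) (φ : V →ₗ[R] V) (u v : V) : V :=
  f v • φ u - f u • φ v

variable (f : V →ₗ[R] R) (φ : V →ₗ[R] V)

theorem skewBracket_smul_add_left (c : R) (u u' v : V) :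
    skewBracket f φ (c • u + u') v = c • skewBracket f φ u v + skewBracket f φ u' v := by
  simp only [skewBracket, map_add, map_smul, smul_eq_mul]
  module

theorem skewBracket_smul_add_right (c : R) (u v v' : V) :
    skewBracket f φ u (c • v + v') = c • skewBracket f φ u v + skewBracket f φ u v' := by
  simp only [skewBracket, map_add, map_smul, smul_eq_mul]
  module

theorem skewBracket_anticomm (u v : V) : skewBracket f φ u v = -skewBracket f φ v u := by
  simp only [skewBracket]
  module

variable {f φ}

theorem skewBracket_jacobi (hfφ : f ∘ₗ φ = 0) (u v w : V) :
    skewBracket f φ u (skewBracket f φ v w) + skewBracket f φ v (skewBracket f φ w u)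
      + skewBracket f φ w (skewBracket f φ u v) = 0 := by
  have hf : ∀ x, f (φ x) = 0 := fun x => LinearMap.congr_fun hfφ x
  simp only [skewBracket, map_sub, map_smul, hf, smul_eq_mul, mul_zero, sub_zero]
  module

end SkewBracket

def centralCoord (n : ℕ) : Heis n →ₗ[ℝ] ℝ := LinearMap.snd ℝ _ _ ∘ₗ LinearMap.snd ℝ _ _

def heisFlip (n : ℕ) : Heis n →ₗ[ℝ] Heis n :=
  (LinearMap.fst ℝ _ _).prod ((-(LinearMap.fst ℝ _ _ ∘ₗ LinearMap.snd ℝ _ _)).prod 0)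

theorem centralCoord_comp_smul_heisFlip (n : ℕ) (lam : ℝ) :
    centralCoord n ∘ₗ (lam • heisFlip n) = 0 := by
  ext <;> simp [centralCoord, heisFlip]

theorem gBr1_eq_skewBracket {n : ℕ} (lam : ℝ) :
    gBr1 lam = skewBracket (centralCoord n) (lam • heisFlip n) := by
  ext μ ν : 2
  simp only [gBr1, skewBracket, centralCoord, heisFlip]
  ext <;> simp <;> ring

theorem pairL_comm {n : ℕ} (μ X : Heis n) : pairL μ X = pairL X μ := by
  simp only [pairL, LinearMap.coe_mk, AddHom.coe_mk, mul_comm]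

theorem pairL_heisFlip {n : ℕ} (μ X : Heis n) :
    pairL (heisFlip n μ) X = pairL μ (heisFlip n X) := by
  simp [pairL, heisFlip]

theorem pairL_ez {n : ℕ} (μ : Heis n) : pairL μ (ez n) = centralCoord n μ := by
  simp [pairL, ez, centralCoord]

theorem pairT_tmul {n : ℕ} (μ ν a b : Heis n) : pairT μ ν (a ⊗ₜ b) = pairL μ a * pairL ν b :=
  rfl

theorem delta1_eq_tmul_sub_tmul {n : ℕ} (lam : ℝ) (X : Heis n) :
    delta1 lam X = (lam • heisFlip n X) ⊗ₜ ez n - ez n ⊗ₜ (lam • heisFlip n X) := by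
  rw [delta1, smul_sub, TensorProduct.smul_tmul', ← TensorProduct.tmul_smul]
  rfl

theorem pairL_gBr1_eq_pairT_delta1 {n : ℕ} (lam : ℝ) (μ ν X : Heis n) :
    pairL (gBr1 lam μ ν) X = pairT μ ν (delta1 lam X) := by
  rw [gBr1_eq_skewBracket, pairL_comm, delta1_eq_tmul_sub_tmul]
  simp only [skewBracket, map_sub, map_smul, pairT_tmul, pairL_ez, LinearMap.smul_apply,
    smul_eq_mul, pairL_comm X (heisFlip n _), pairL_heisFlip]
  ring

theorem gBr1_lie_algebra_dual_to_delta1_general (n : ℕ) (lam : ℝ) :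
    (∀ (c : ℝ) (μ μ' ν : Heis n),
        gBr1 lam (c • μ + μ') ν = c • gBr1 lam μ ν + gBr1 lam μ' ν) ∧
    (∀ (c : ℝ) (μ ν ν' : Heis n),
        gBr1 lam μ (c • ν + ν') = c • gBr1 lam μ ν + gBr1 lam μ ν') ∧
    (∀ μ ν : Heis n, gBr1 lam μ ν = - gBr1 lam ν μ) ∧
    (∀ μ ν ρ : Heis n,
        gBr1 lam μ (gBr1 lam ν ρ) + gBr1 lam ν (gBr1 lam ρ μ)
          + gBr1 lam ρ (gBr1 lam μ ν) = 0) ∧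
    (∀ (μ ν X : Heis n), pairL (gBr1 lam μ ν) X = pairT μ ν (delta1 lam X)) := by
  refine ⟨?_, ?_, ?_, ?_, pairL_gBr1_eq_pairT_delta1 lam⟩ <;> rw [gBr1_eq_skewBracket]
  exacts [skewBracket_smul_add_left _ _, skewBracket_smul_add_right _ _,
    skewBracket_anticomm _ _, skewBracket_jacobi (centralCoord_comp_smul_heisFlip n lam)]

/-- The bracket `[(p,q,r),(p',q',r')] = (λ(r'p − rp'), −λ(r'q − rq'), 0)` on
`g = ℝⁿ × ℝⁿ × ℝ` is bilinear, antisymmetric and satisfies the Jacobi identity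
(so it makes `g` a Lie algebra); moreover it is dual to the cobracket `δ₁`:
`⟨[μ,ν], X⟩ = ⟨μ ⊗ ν, δ₁(X)⟩` for all `μ, ν ∈ g` and `X ∈ h`. -/
theorem gBr1_lie_algebra_dual_to_delta1 (n : ℕ) (hn : 1 ≤ n) (lam : ℝ) :
    (∀ (c : ℝ) (μ μ' ν : Heis n),
        gBr1 lam (c • μ + μ') ν = c • gBr1 lam μ ν + gBr1 lam μ' ν) ∧
    (∀ (c : ℝ) (μ ν ν' : Heis n),
        gBr1 lam μ (c • ν + ν') = c • gBr1 lam μ ν + gBr1 lam μ ν') ∧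
    (∀ μ ν : Heis n, gBr1 lam μ ν = - gBr1 lam ν μ) ∧
    (∀ μ ν ρ : Heis n,
        gBr1 lam μ (gBr1 lam ν ρ) + gBr1 lam ν (gBr1 lam ρ μ)
          + gBr1 lam ρ (gBr1 lam μ ν) = 0) ∧
    (∀ (μ ν X : Heis n), pairL (gBr1 lam μ ν) X = pairT μ ν (delta1 lam X)) :=
  gBr1_lie_algebra_dual_to_delta1_general n lam

end
end

section
/- Let n ≥ 1 and λ ∈ ℝ. The bilinear bracket on g = ℝⁿ × ℝⁿ × ℝ defined by [(p,q,r),(p',q',r')] = (λ(r'p − r p'), λ(r'q − r q'), 0) is antisymmetric and satisfies the Jacobi identity, so it makes g a Lie algebra; moreover it is dual to the cobracket δ₂ in the sense that for all μ, ν ∈ g and all X ∈ h, ⟨[μ,ν], X⟩ = ⟨μ ⊗ ν, δ₂(X)⟩, where δ₂(x,y,z) = λ·((x,y,0) ⊗ e_z − e_z ⊗ (x,y,0)) with e_z = (0,0,1). -/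
open scoped TensorProduct BigOperators

noncomputable section

/-- The bracket `[(p,q,r),(p',q',r')] = (λ(r'p − rp'), λ(r'q − rq'), 0)` on
`g = ℝⁿ × ℝⁿ × ℝ`. -/
def gBr2 {n : ℕ} (lam : ℝ) (μ ν : Heis n) : Heis n :=
  (lam • (ν.2.2 • μ.1 - μ.2.2 • ν.1), lam • (ν.2.2 • μ.2.1 - μ.2.2 • ν.2.1), 0)

/-- The bracket `[(p,q,r),(p',q',r')] = (λ(r'p − rp'), λ(r'q − rq'), 0)` on
`g = ℝⁿ × ℝⁿ × ℝ` is bilinear, antisymmetric and satisfies the Jacobi identity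
(so it makes `g` a Lie algebra); moreover it is dual to the cobracket `δ₂`:
`⟨[μ,ν], X⟩ = ⟨μ ⊗ ν, δ₂(X)⟩` for all `μ, ν ∈ g` and `X ∈ h`. -/
theorem gBr2_lie_algebra_dual_to_delta2 (n : ℕ) (hn : 1 ≤ n) (lam : ℝ) :
    (∀ (c : ℝ) (μ μ' ν : Heis n),
        gBr2 lam (c • μ + μ') ν = c • gBr2 lam μ ν + gBr2 lam μ' ν) ∧
    (∀ (c : ℝ) (μ ν ν' : Heis n),
        gBr2 lam μ (c • ν + ν') = c • gBr2 lam μ ν + gBr2 lam μ ν') ∧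
    (∀ μ ν : Heis n, gBr2 lam μ ν = - gBr2 lam ν μ) ∧
    (∀ μ ν ρ : Heis n,
        gBr2 lam μ (gBr2 lam ν ρ) + gBr2 lam ν (gBr2 lam ρ μ)
          + gBr2 lam ρ (gBr2 lam μ ν) = 0) ∧
    (∀ (μ ν X : Heis n), pairL (gBr2 lam μ ν) X = pairT μ ν (delta2 lam X)) := by
  have key : ∀ (a b : Heis n), a.1 = b.1 → a.2.1 = b.2.1 → a.2.2 = b.2.2 → a = b := by
    intro a b h1 h2 h3
    exact Prod.ext h1 (Prod.ext h2 h3)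
  refine ⟨?_, ?_, ?_, ?_, ?_⟩
  · intro c μ μ' ν
    refine key _ _ (funext fun i => ?_) (funext fun i => ?_) (by simp [gBr2]) <;>
      simp [gBr2, mul_sub, sub_mul, mul_add] <;> ring
  · intro c μ ν ν'
    refine key _ _ (funext fun i => ?_) (funext fun i => ?_) (by simp [gBr2]) <;>
      simp [gBr2, mul_sub, sub_mul, mul_add] <;> ring
  · intro μ ν
    refine key _ _ (funext fun i => ?_) (funext fun i => ?_) (by simp [gBr2]) <;>
      simp [gBr2, mul_sub, sub_mul, mul_add] <;> ring
  · intro μ ν ρ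
    refine key _ _ (funext fun i => ?_) (funext fun i => ?_) (by simp [gBr2]) <;>
      simp [gBr2, mul_sub, sub_mul, mul_add] <;> ring
  · intro μ ν X
    simp only [gBr2, pairT, delta2, ez, pairL, map_smul, map_sub,
      TensorProduct.lift.tmul, LinearMap.compl₁₂_apply, LinearMap.mul_apply',
      LinearMap.coe_mk, AddHom.coe_mk, smul_eq_mul]
    simp only [Pi.smul_apply, smul_eq_mul, Pi.sub_apply, Finset.mul_sum, Finset.sum_sub_distrib]
    simp [Finset.mul_sum, mul_sub, sub_mul, add_mul, mul_add, Finset.sum_sub_distrib,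
      Finset.sum_add_distrib]
    ring_nf
    simp only [Finset.mul_sum]
    ring_nf

end
end

section
/- Let n ≥ 2 and let J be a skew-symmetric real n × n matrix. The bilinear bracket on g = ℝⁿ × ℝⁿ × ℝ defined by [(p,q,r),(p',q',r')] = (0, r'·Bp − r·Bp', 0), where (Bp)_j = Σ_i J_{ij} p_i, is antisymmetric and satisfies the Jacobi identity, so it makes g a Lie algebra; moreover it is dual to the cobracket δ₃ in the sense that for all μ, ν ∈ g and all X ∈ h, ⟨[μ,ν], X⟩ = ⟨μ ⊗ ν, δ₃(X)⟩, where δ₃(x,y,z) = (Jy,0,0) ⊗ e_z − e_z ⊗ (Jy,0,0) with (Jy)_i = Σ_j J_{ij} y_j and e_z = (0,0,1). -/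
open scoped TensorProduct BigOperators

noncomputable section

/-- The map `(Bp)_j = Σ_i J_{ij} p_i`. -/
def Bmap {n : ℕ} (J : Matrix (Fin n) (Fin n) ℝ) (p : Fin n → ℝ) : Fin n → ℝ :=
  fun j => ∑ i, J i j * p i

/-- The bracket `[(p,q,r),(p',q',r')] = (0, r'·Bp − r·Bp', 0)` on
`g = ℝⁿ × ℝⁿ × ℝ`, where `(Bp)_j = Σ_i J_{ij} p_i`. -/
def gBr3 {n : ℕ} (J : Matrix (Fin n) (Fin n) ℝ) (μ ν : Heis n) : Heis n :=
  (0, ν.2.2 • Bmap J μ.1 - μ.2.2 • Bmap J ν.1, 0)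

/-- For a skew-symmetric `n × n` matrix `J` (`n ≥ 2`), the bracket
`[(p,q,r),(p',q',r')] = (0, r'·Bp − r·Bp', 0)` on `g = ℝⁿ × ℝⁿ × ℝ` is bilinear,
antisymmetric and satisfies the Jacobi identity (so it makes `g` a Lie algebra);
moreover it is dual to the cobracket `δ₃`: `⟨[μ,ν], X⟩ = ⟨μ ⊗ ν, δ₃(X)⟩`
for all `μ, ν ∈ g` and `X ∈ h`. -/
theorem gBr3_lie_algebra_dual_to_delta3 (n : ℕ) (hn : 2 ≤ n)
    (J : Matrix (Fin n) (Fin n) ℝ) (hJ : ∀ i j, J i j = - J j i) :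
    (∀ (c : ℝ) (μ μ' ν : Heis n),
        gBr3 J (c • μ + μ') ν = c • gBr3 J μ ν + gBr3 J μ' ν) ∧
    (∀ (c : ℝ) (μ ν ν' : Heis n),
        gBr3 J μ (c • ν + ν') = c • gBr3 J μ ν + gBr3 J μ ν') ∧
    (∀ μ ν : Heis n, gBr3 J μ ν = - gBr3 J ν μ) ∧
    (∀ μ ν ρ : Heis n,
        gBr3 J μ (gBr3 J ν ρ) + gBr3 J ν (gBr3 J ρ μ)
          + gBr3 J ρ (gBr3 J μ ν) = 0) ∧
    (∀ (μ ν X : Heis n), pairL (gBr3 J μ ν) X = pairT μ ν (delta3 J X)) := by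
  have Bmap_zero : Bmap J (0 : Fin n → ℝ) = 0 := by
    funext j; simp [Bmap]
  have Bmap_add : ∀ p p' : Fin n → ℝ, Bmap J (p + p') = Bmap J p + Bmap J p' := by
    intro p p'; funext j; simp [Bmap, mul_add, Finset.sum_add_distrib]
  have Bmap_smul : ∀ (c : ℝ) (p : Fin n → ℝ), Bmap J (c • p) = c • Bmap J p := by
    intro c p; funext j
    simp only [Bmap, Pi.smul_apply, smul_eq_mul, Finset.mul_sum]
    exact Finset.sum_congr rfl fun i _ => by ring
  have key : ∀ (a y : Fin n → ℝ),
      ∑ j, (∑ i, J i j * a i) * y j = ∑ i, a i * ∑ j, J i j * y j := by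
    intro a y
    simp_rw [Finset.sum_mul, Finset.mul_sum]
    rw [Finset.sum_comm]
    exact Finset.sum_congr rfl fun i _ => Finset.sum_congr rfl fun j _ => by ring
  refine ⟨?_, ?_, ?_, ?_, ?_⟩
  · intro c μ μ' ν
    simp only [gBr3, Prod.fst_add, Prod.snd_add, Prod.smul_fst, Prod.smul_snd,
      Bmap_add, Bmap_smul, smul_eq_mul, Prod.smul_mk, Prod.mk_add_mk, smul_zero, add_zero]
    refine Prod.ext rfl (Prod.ext ?_ (by simp))
    simp only
    module
  · intro c μ ν ν'
    simp only [gBr3, Prod.fst_add, Prod.snd_add, Prod.smul_fst, Prod.smul_snd,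
      Bmap_add, Bmap_smul, smul_eq_mul, Prod.smul_mk, Prod.mk_add_mk, smul_zero, add_zero]
    refine Prod.ext rfl (Prod.ext ?_ (by simp))
    simp only
    module
  · intro μ ν
    simp only [gBr3, Prod.neg_mk, neg_sub, neg_zero]
  · intro μ ν ρ
    have h0 : ∀ α β : Heis n, gBr3 J α (gBr3 J β ρ) = gBr3 J α (gBr3 J β ρ) := fun _ _ => rfl
    have z : ∀ α β γ : Heis n, gBr3 J α (gBr3 J β γ) = 0 := by
      intro α β γ
      simp only [gBr3, Bmap_zero, smul_zero, zero_smul, zero_sub, neg_zero, sub_zero]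
      rfl
    simp [z]
  · intro μ ν X
    have lhs : pairL (gBr3 J μ ν) X
        = ∑ j, (ν.2.2 * Bmap J μ.1 j - μ.2.2 * Bmap J ν.1 j) * X.2.1 j := by
      simp only [pairL, gBr3, LinearMap.coe_mk, AddHom.coe_mk, Pi.zero_apply, zero_mul,
        Finset.sum_const_zero, zero_add, mul_zero, add_zero, Pi.sub_apply, Pi.smul_apply,
        smul_eq_mul]
    rw [lhs]
    have rhs : pairT μ ν (delta3 J X)
        = (∑ i, μ.1 i * ∑ j, J i j * X.2.1 j) * ν.2.2
          - μ.2.2 * ∑ i, ν.1 i * ∑ j, J i j * X.2.1 j := by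
      simp only [pairT, delta3, ez, map_sub, TensorProduct.lift.tmul,
        LinearMap.compl₁₂_apply, LinearMap.mul_apply', pairL, LinearMap.coe_mk, AddHom.coe_mk]
      simp
    rw [rhs]
    simp only [Bmap, sub_mul, Finset.sum_sub_distrib]
    have e1 : ∑ j, ν.2.2 * (∑ i, J i j * μ.1 i) * X.2.1 j
        = ν.2.2 * ∑ j, (∑ i, J i j * μ.1 i) * X.2.1 j := by
      rw [Finset.mul_sum]; exact Finset.sum_congr rfl fun j _ => by ring
    have e2 : ∑ j, μ.2.2 * (∑ i, J i j * ν.1 i) * X.2.1 j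
        = μ.2.2 * ∑ j, (∑ i, J i j * ν.1 i) * X.2.1 j := by
      rw [Finset.mul_sum]; exact Finset.sum_congr rfl fun j _ => by ring
    rw [e1, e2, key, key]
    ring


end
end

section
/- Let n ≥ 2, let J be a skew-symmetric real n × n matrix, and let g = ℝⁿ × ℝⁿ × ℝ with standard basis vectors p₁,…,p_n (first factor), q₁,…,q_n (second factor), and r (third factor). For r ∈ ℝ define the linear map A_r : g → g by A_r(p,q,s) = (p, q − r·Cp, s), where (Cp)_j = Σ_k p_k J_{kj}, and define F : ℝ → g ⊗ g by F(r) = r·Σ_{k=1}^n (p_k ⊗ q_k − q_k ⊗ p_k) − (r²/2)·Σ_{k,j=1}^n J_{kj} (q_j ⊗ q_k − q_k ⊗ q_j). Then for all r, r' ∈ ℝ: (i) A_{r+r'} = A_r ∘ A_{r'}, and (ii) the 1-cocycle identity F(r + r') = F(r) + (A_r ⊗ A_r)(F(r')) holds in g ⊗ g. -/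
open scoped TensorProduct BigOperators

noncomputable section

/-- The underlying space `g = ℝⁿ × ℝⁿ × ℝ`. -/
abbrev G (n : ℕ) : Type := (Fin n → ℝ) × (Fin n → ℝ) × ℝ

/-- The linear map `(Cp)_j = Σ_k p_k J_{kj}`. -/
def CmapL {n : ℕ} (J : Matrix (Fin n) (Fin n) ℝ) : (Fin n → ℝ) →ₗ[ℝ] (Fin n → ℝ) where
  toFun p := fun j => ∑ k, p k * J k j
  map_add' p q := by
    funext j
    simp [add_mul, Finset.sum_add_distrib]
  map_smul' c p := by
    funext j
    simp [Finset.mul_sum, mul_assoc]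

/-- The linear map `A_r : g → g`, `A_r(p,q,s) = (p, q − r·Cp, s)`. -/
def Amap {n : ℕ} (J : Matrix (Fin n) (Fin n) ℝ) (r : ℝ) : G n →ₗ[ℝ] G n where
  toFun v := (v.1, v.2.1 - r • CmapL J v.1, v.2.2)
  map_add' v w := by
    simp only [Prod.fst_add, Prod.snd_add, map_add, smul_add, Prod.mk_add_mk, Prod.mk.injEq]
    refine ⟨trivial, ?_, trivial⟩
    abel
  map_smul' c v := by
    simp only [Prod.smul_fst, Prod.smul_snd, map_smul, RingHom.id_apply, Prod.smul_mk,
      Prod.mk.injEq]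
    refine ⟨trivial, ?_, trivial⟩
    rw [smul_sub, smul_comm]

/-- The standard basis vector `p_k` of the first `ℝⁿ` factor. -/
def pvec {n : ℕ} (k : Fin n) : G n := (Pi.single k 1, 0, 0)

/-- The standard basis vector `q_k` of the second `ℝⁿ` factor. -/
def qvec {n : ℕ} (k : Fin n) : G n := (0, Pi.single k 1, 0)

/-- `F(r) = r·Σ_k (p_k ⊗ q_k − q_k ⊗ p_k) − (r²/2)·Σ_{k,j} J_{kj}(q_j ⊗ q_k − q_k ⊗ q_j)`. -/
def Fmap {n : ℕ} (J : Matrix (Fin n) (Fin n) ℝ) (r : ℝ) : G n ⊗[ℝ] G n :=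
  r • (∑ k, (pvec k ⊗ₜ[ℝ] qvec k - qvec k ⊗ₜ[ℝ] pvec k))
    - (r ^ 2 / 2) • (∑ k, ∑ j, J k j • (qvec j ⊗ₜ[ℝ] qvec k - qvec k ⊗ₜ[ℝ] qvec j))


lemma Aq {n : ℕ} (J : Matrix (Fin n) (Fin n) ℝ) (r : ℝ) (k : Fin n) :
    Amap J r (qvec k) = qvec k := by
  simp only [Amap, qvec, CmapL, LinearMap.coe_mk, AddHom.coe_mk]
  refine Prod.ext rfl (Prod.ext ?_ rfl)
  show Pi.single k 1 - r • (fun j => ∑ m, (0:Fin n → ℝ) m * J m j) = Pi.single k 1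
  have h : (fun j => ∑ m, (0:Fin n → ℝ) m * J m j) = (0 : Fin n → ℝ) := by
    funext j; simp
  rw [h, smul_zero, sub_zero]

lemma Ap {n : ℕ} (J : Matrix (Fin n) (Fin n) ℝ) (r : ℝ) (k : Fin n) :
    Amap J r (pvec k) = pvec k - r • ∑ j, J k j • qvec j := by
  have h2 : (∑ j, J k j • qvec j : G n) = (0, fun j => J k j, 0) := by
    refine Prod.ext ?_ (Prod.ext ?_ ?_)
    · simp [qvec, Prod.fst_sum]
    · rw [Prod.snd_sum, Prod.fst_sum]
      funext j
      simp [qvec, Finset.sum_apply, Pi.single_apply, eq_comm]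
    · simp [qvec, Prod.snd_sum]
  have hC : (CmapL J) (Pi.single k (1:ℝ)) = fun j => J k j := by
    funext j; simp [CmapL, Pi.single_apply]
  rw [h2]
  show ((Pi.single k 1 : Fin n → ℝ), (0:Fin n → ℝ) - r • CmapL J (Pi.single k 1), (0:ℝ))
      = pvec k - r • ((0:Fin n → ℝ), (fun j => J k j), (0:ℝ))
  rw [hC, pvec]
  refine Prod.ext ?_ (Prod.ext ?_ ?_) <;> simp

theorem Amap_aux {n : ℕ} (J : Matrix (Fin n) (Fin n) ℝ) :
    ∀ r r' : ℝ, Amap J (r + r') = (Amap J r).comp (Amap J r') := by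
  intro r r'
  apply LinearMap.ext; intro v
  simp only [Amap, LinearMap.coe_mk, AddHom.coe_mk, LinearMap.comp_apply]
  refine Prod.ext rfl (Prod.ext ?_ rfl)
  show v.2.1 - (r + r') • CmapL J v.1 = (v.2.1 - r' • CmapL J v.1) - r • CmapL J v.1
  rw [add_smul]; abel

/-- For a skew-symmetric `n × n` matrix `J` (`n ≥ 2`): (i) `A_{r+r'} = A_r ∘ A_{r'}`,
and (ii) the 1-cocycle identity `F(r+r') = F(r) + (A_r ⊗ A_r)(F(r'))` holds in `g ⊗ g`. -/
theorem Amap_action_and_Fmap_cocycle (n : ℕ) (hn : 2 ≤ n)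
    (J : Matrix (Fin n) (Fin n) ℝ) (hJ : ∀ i j, J i j = - J j i) :
    (∀ r r' : ℝ, Amap J (r + r') = (Amap J r).comp (Amap J r')) ∧
    (∀ r r' : ℝ,
        Fmap J (r + r') = Fmap J r
          + TensorProduct.map (Amap J r) (Amap J r) (Fmap J r')) := by
  refine ⟨Amap_aux J, ?_⟩
  intro r r'
  set S : G n ⊗[ℝ] G n := ∑ k, (pvec k ⊗ₜ[ℝ] qvec k - qvec k ⊗ₜ[ℝ] pvec k) with hSdef
  set T : G n ⊗[ℝ] G n :=
    ∑ k, ∑ j, J k j • (qvec j ⊗ₜ[ℝ] qvec k - qvec k ⊗ₜ[ℝ] qvec j) with hTdef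
  have hmapT : TensorProduct.map (Amap J r) (Amap J r) T = T := by
    rw [hTdef, map_sum]
    refine Finset.sum_congr rfl fun k _ => ?_
    rw [map_sum]
    refine Finset.sum_congr rfl fun j _ => ?_
    rw [map_smul, map_sub, TensorProduct.map_tmul, TensorProduct.map_tmul, Aq, Aq]
  have hmapS : TensorProduct.map (Amap J r) (Amap J r) S = S - r • T := by
    have hrhs : S - r • T = ∑ k, ((pvec k ⊗ₜ[ℝ] qvec k - qvec k ⊗ₜ[ℝ] pvec k)
        - r • ∑ j, J k j • (qvec j ⊗ₜ[ℝ] qvec k - qvec k ⊗ₜ[ℝ] qvec j)) := by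
      rw [hSdef, hTdef, Finset.smul_sum, Finset.sum_sub_distrib, Finset.sum_sub_distrib, Finset.sum_sub_distrib]
    rw [hSdef, map_sum, hrhs]
    refine Finset.sum_congr rfl fun k _ => ?_
    rw [map_sub, TensorProduct.map_tmul, TensorProduct.map_tmul, Aq, Ap]
    simp only [TensorProduct.sub_tmul, TensorProduct.tmul_sub, ← TensorProduct.smul_tmul',
      TensorProduct.tmul_smul, TensorProduct.sum_tmul, TensorProduct.tmul_sum,
      Finset.smul_sum, smul_sub, Finset.sum_sub_distrib]
    abel
  show Fmap J (r + r') = Fmap J r + TensorProduct.map (Amap J r) (Amap J r) (Fmap J r')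
  rw [Fmap, Fmap, Fmap, map_sub, map_smul, map_smul, hmapS, hmapT]
  rw [← hSdef, ← hTdef]
  have h : ((r + r') ^ 2 / 2 : ℝ) = r ^ 2 / 2 + (r' * r + r' ^ 2 / 2) := by ring
  rw [h]
  rw [smul_sub, smul_smul]
  module

end
end
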